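/- arXiv:1904.13070 — 6 statements merged into one kernel-verified Lean document; each statement's English description precedes it below -/
import Mathlib

section
/- Under the network assumptions, the scalar consensus iteration λ_i(k+1) = Σ_{j=1}^n W(k)_{ij} λ_j(k) converges geometrically to the average of the initial values: setting λ* = (1/n) Σ_{j=1}^n λ_j(0), for every i and every k ≥ 0 one has |λ_i(k+1) − λ*| ≤ n·μ·β^{k} · max_{1≤j≤n} |λ_j(0)|; in particular λ_i(k) → λ* as k → ∞ for every i. -/
/-!
Each step averages, so the spread `max λ(k) - min λ(k)` never increases, while column
stochasticity keeps the average `λ*` fixed between the minimum and the maximum; hence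
`|λᵢ(k) - λ*|` is bounded by the spread. Over `κ` consecutive steps some weight `≥ η` links
every pair of agents and the self-loops `≥ η` carry it through the rest of the window, so every
entry of the product of `K₀ ≥ κ` consecutive weight matrices is at least `η ^ K₀`. Such a
product contracts the spread by `1 - η ^ K₀ = β ^ K₀`, which gives the geometric rate.
-/

open Filter Finset Matrix

section Spread

variable {ι : Type*} [Fintype ι] [Nonempty ι]

noncomputable def spread (x : ι → ℝ) : ℝ :=
  univ.sup' univ_nonempty x - univ.inf' univ_nonempty x

lemma spread_nonneg (x : ι → ℝ) : 0 ≤ spread x := by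
  obtain ⟨i⟩ := ‹Nonempty ι›
  exact sub_nonneg.2 ((inf'_le x (mem_univ i)).trans (le_sup' x (mem_univ i)))

lemma spread_eq_zero [Subsingleton ι] (x : ι → ℝ) : spread x = 0 := by
  obtain ⟨i, -, hi⟩ := exists_mem_eq_sup' univ_nonempty x
  obtain ⟨j, -, hj⟩ := exists_mem_eq_inf' univ_nonempty x
  rw [spread, hi, hj, Subsingleton.elim i j, sub_self]

lemma abs_sub_average_le_spread (x : ι → ℝ) (i : ι) :
    |x i - (Fintype.card ι : ℝ)⁻¹ * ∑ j, x j| ≤ spread x := by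
  have hcard : (0 : ℝ) < Fintype.card ι := by exact_mod_cast Fintype.card_pos
  have hlo : univ.inf' univ_nonempty x ≤ (Fintype.card ι : ℝ)⁻¹ * ∑ j, x j := by
    rw [le_inv_mul_iff₀ hcard]
    simpa using card_nsmul_le_sum univ x _ fun j _ => inf'_le x (mem_univ j)
  have hhi : (Fintype.card ι : ℝ)⁻¹ * ∑ j, x j ≤ univ.sup' univ_nonempty x := by
    rw [inv_mul_le_iff₀ hcard]
    simpa using sum_le_card_nsmul univ x _ fun j _ => le_sup' x (mem_univ j)
  rw [spread, abs_le]
  constructor <;> linarith [inf'_le x (mem_univ i), le_sup' x (mem_univ i)]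

lemma spread_le_two_mul_sup'_abs (x : ι → ℝ) :
    spread x ≤ 2 * univ.sup' univ_nonempty (fun j => |x j|) := by
  have hsup : univ.sup' univ_nonempty x ≤ univ.sup' univ_nonempty (fun j => |x j|) :=
    sup'_mono_fun fun j _ => le_abs_self (x j)
  have hinf : -univ.sup' univ_nonempty (fun j => |x j|) ≤ univ.inf' univ_nonempty x :=
    le_inf' _ _ fun j _ =>
      neg_le.1 ((neg_le_abs (x j)).trans (le_sup' (fun j => |x j|) (mem_univ j)))
  rw [spread]
  linarith

end Spread

section StochasticMatrix

variable {ι : Type*} [Fintype ι]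

lemma apply_mul_apply_le_mul_apply {A B : Matrix ι ι ℝ} (hA : ∀ i j, 0 ≤ A i j)
    (hB : ∀ i j, 0 ≤ B i j) (i l j : ι) : A i l * B l j ≤ (A * B) i j :=
  single_le_sum (f := fun l => A i l * B l j) (fun _ _ => mul_nonneg (hA _ _) (hB _ _))
    (mem_univ l)

variable [DecidableEq ι] {P : Matrix ι ι ℝ}

lemma mulVec_apply_le_sub (hP : P ∈ rowStochastic ℝ ι) {x : ι → ℝ} {b : ℝ}
    (hx : ∀ l, x l ≤ b) (i j : ι) : (P *ᵥ x) i ≤ b - P i j * (b - x j) := by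
  have hsum : b - (P *ᵥ x) i = ∑ l, P i l * (b - x l) := by
    simp only [mulVec, dotProduct, mul_sub, sum_sub_distrib, ← sum_mul,
      sum_row_of_mem_rowStochastic hP, one_mul]
  have := single_le_sum (f := fun l => P i l * (b - x l))
    (fun l _ => mul_nonneg (nonneg_of_mem_rowStochastic hP) (sub_nonneg.2 (hx l))) (mem_univ j)
  linarith

lemma add_le_mulVec_apply (hP : P ∈ rowStochastic ℝ ι) {x : ι → ℝ} {a : ℝ}
    (hx : ∀ l, a ≤ x l) (i j : ι) : a + P i j * (x j - a) ≤ (P *ᵥ x) i := by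
  have hsum : (P *ᵥ x) i - a = ∑ l, P i l * (x l - a) := by
    simp only [mulVec, dotProduct, mul_sub, sum_sub_distrib, ← sum_mul,
      sum_row_of_mem_rowStochastic hP, one_mul]
  have := single_le_sum (f := fun l => P i l * (x l - a))
    (fun l _ => mul_nonneg (nonneg_of_mem_rowStochastic hP) (sub_nonneg.2 (hx l))) (mem_univ j)
  linarith

/-- Every row of `P` puts weight at least `c` on both the minimiser and the maximiser of `x`,
which keeps each entry of `P *ᵥ x` at distance `c * spread x` inside the range of `x`. -/
lemma spread_mulVec_le [Nonempty ι] (hP : P ∈ rowStochastic ℝ ι) {c : ℝ}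
    (hc : ∀ i j, c ≤ P i j) (x : ι → ℝ) : spread (P *ᵥ x) ≤ (1 - 2 * c) * spread x := by
  set S := univ.sup' univ_nonempty x
  set I := univ.inf' univ_nonempty x
  obtain ⟨jmin, -, hjmin⟩ := exists_mem_eq_inf' univ_nonempty x
  obtain ⟨jmax, -, hjmax⟩ := exists_mem_eq_sup' univ_nonempty x
  have hS : S - x jmin = spread x := by rw [← hjmin]; rfl
  have hI : x jmax - I = spread x := by rw [← hjmax]; rfl
  have hcs i j : c * spread x ≤ P i j * spread x :=
    mul_le_mul_of_nonneg_right (hc i j) (spread_nonneg x)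
  have hup i : (P *ᵥ x) i ≤ S - c * spread x := by
    have := mulVec_apply_le_sub hP (b := S) (fun l => le_sup' x (mem_univ l)) i jmin
    rw [hS] at this
    linarith [hcs i jmin]
  have hlo i : I + c * spread x ≤ (P *ᵥ x) i := by
    have := add_le_mulVec_apply hP (a := I) (fun l => inf'_le x (mem_univ l)) i jmax
    rw [hI] at this
    linarith [hcs i jmax]
  have hSI : S - I = spread x := rfl
  have := sup'_le univ_nonempty _ fun i _ => hup i
  have := le_inf' univ_nonempty _ fun i _ => hlo i
  rw [spread]
  linarith

lemma le_mul_apply_of_le {B : Matrix ι ι ℝ} (hP : P ∈ rowStochastic ℝ ι) {c : ℝ} {j : ι}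
    (hB : ∀ l, c ≤ B l j) (i : ι) : c ≤ (P * B) i j :=
  calc c = ∑ l, P i l * c := by rw [← sum_mul, sum_row_of_mem_rowStochastic hP, one_mul]
    _ ≤ ∑ l, P i l * B l j :=
      sum_le_sum fun l _ => mul_le_mul_of_nonneg_left (hB l) (nonneg_of_mem_rowStochastic hP)

end StochasticMatrix

section TransitionMatrix

variable {ι : Type*} [Fintype ι] [DecidableEq ι]

def transitionMatrix (W : ℕ → Matrix ι ι ℝ) (k : ℕ) : ℕ → Matrix ι ι ℝ
  | 0 => 1
  | m + 1 => W (k + m) * transitionMatrix W k m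

variable {W : ℕ → Matrix ι ι ℝ} (hW : ∀ k, W k ∈ rowStochastic ℝ ι)
include hW

lemma transitionMatrix_mem_rowStochastic (k m : ℕ) :
    transitionMatrix W k m ∈ rowStochastic ℝ ι := by
  induction m with
  | zero => exact one_mem _
  | succ m ih => exact mul_mem (hW _) ih

lemma pow_le_transitionMatrix_apply_self {η : ℝ} (hη : 0 ≤ η) (hdiag : ∀ k i, η ≤ W k i i)
    (k m : ℕ) (i : ι) : η ^ m ≤ transitionMatrix W k m i i := by
  induction m with
  | zero => simp [transitionMatrix]
  | succ m ih =>
    calc η ^ (m + 1) = η * η ^ m := pow_succ' η m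
      _ ≤ W (k + m) i i * transitionMatrix W k m i i :=
        mul_le_mul (hdiag _ i) ih (pow_nonneg hη m) (hη.trans (hdiag _ i))
      _ ≤ transitionMatrix W k (m + 1) i i :=
        apply_mul_apply_le_mul_apply (hW _).1 (transitionMatrix_mem_rowStochastic hW k m).1 i i i

/-- A single weight `W s i j ≥ η` inside the window survives in the product, since the
self-loops carry everything else through. -/
lemma pow_le_transitionMatrix_apply {η : ℝ} (hη : 0 ≤ η) (hdiag : ∀ k i, η ≤ W k i i)
    {k s : ℕ} {i j : ι} (hs : η ≤ W s i j) (hks : k ≤ s) {m : ℕ} (hsm : s < k + m) :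
    η ^ m ≤ transitionMatrix W k m i j := by
  induction m with
  | zero => omega
  | succ m ih =>
    have hWT := apply_mul_apply_le_mul_apply (hW (k + m)).1
      (transitionMatrix_mem_rowStochastic hW k m).1
    rw [pow_succ']
    rcases (show s < k + m ∨ s = k + m by omega) with hlt | rfl
    · exact (mul_le_mul (hdiag _ i) (ih hlt) (pow_nonneg hη m) (hη.trans (hdiag _ i))).trans
        (hWT i i j)
    · exact (mul_le_mul hs (pow_le_transitionMatrix_apply_self hW hη hdiag k m j)
        (pow_nonneg hη m) (hη.trans hs)).trans (hWT i j j)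

lemma le_transitionMatrix_apply_of_le {c : ℝ} {k m : ℕ}
    (hc : ∀ i j, c ≤ transitionMatrix W k m i j) {m' : ℕ} (hm : m ≤ m') (i j : ι) :
    c ≤ transitionMatrix W k m' i j := by
  induction m', hm using Nat.le_induction generalizing i with
  | base => exact hc i j
  | succ m' _ ih => exact le_mul_apply_of_le (hW _) (fun l => ih l) i

end TransitionMatrix

lemma pow_mul_le_pow_mul_of_antitone {u : ℕ → ℝ} {β : ℝ} {K : ℕ} (hu : Antitone u)
    (hu0 : 0 ≤ u 0) (hβ0 : 0 ≤ β) (hβ1 : β ≤ 1) (hK : 0 < K)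
    (hstep : ∀ k, u (k + K) ≤ β ^ K * u k) (k : ℕ) : β ^ K * u k ≤ β ^ k * u 0 := by
  have hβK : 0 ≤ β ^ K := pow_nonneg hβ0 K
  have hmul (q : ℕ) : u (K * q) ≤ β ^ (K * q) * u 0 := by
    induction q with
    | zero => simp
    | succ q ih =>
      calc u (K * (q + 1)) = u (K * q + K) := by rw [mul_add_one]
        _ ≤ β ^ K * (β ^ (K * q) * u 0) := (hstep _).trans (mul_le_mul_of_nonneg_left ih hβK)
        _ = β ^ (K * (q + 1)) * u 0 := by ring
  calc β ^ K * u k ≤ β ^ K * (β ^ (K * (k / K)) * u 0) :=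
        mul_le_mul_of_nonneg_left ((hu (Nat.mul_div_le k K)).trans (hmul _)) hβK
    _ = β ^ (K * (k / K + 1)) * u 0 := by ring
    _ ≤ β ^ k * u 0 :=
        mul_le_mul_of_nonneg_right
          (pow_le_pow_of_le_one hβ0 hβ1 (Nat.lt_mul_div_succ k hK).le) hu0

section Consensus

variable {ι : Type*} [Fintype ι] [DecidableEq ι] {W : ℕ → Matrix ι ι ℝ} {x : ℕ → ι → ℝ}
  (hrec : ∀ k, x (k + 1) = W k *ᵥ x k)
include hrec

lemma sum_apply_eq_sum_apply_zero (hW : ∀ k, W k ∈ colStochastic ℝ ι) (k : ℕ) :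
    ∑ i, x k i = ∑ i, x 0 i := by
  induction k with
  | zero => rfl
  | succ k ih => rw [hrec, sum_mulVec_of_mem_colStochastic (hW k), ih]

variable [Nonempty ι]

lemma abs_sub_initial_average_le_spread (hW : ∀ k, W k ∈ colStochastic ℝ ι) (k : ℕ) (i : ι) :
    |x k i - (Fintype.card ι : ℝ)⁻¹ * ∑ j, x 0 j| ≤ spread (x k) := by
  rw [← sum_apply_eq_sum_apply_zero hrec hW k]
  exact abs_sub_average_le_spread (x k) i

variable (hW : ∀ k, W k ∈ rowStochastic ℝ ι)
include hW

lemma antitone_spread : Antitone fun k => spread (x k) :=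
  antitone_nat_of_succ_le fun k => by
    simpa [hrec] using spread_mulVec_le (hW k) (c := 0)
      (fun _ _ => nonneg_of_mem_rowStochastic (hW k)) (x k)

lemma spread_add_le {η : ℝ} (hη0 : 0 ≤ η) (hη1 : η ≤ 1) (hdiag : ∀ k i, η ≤ W k i i) {κ : ℕ}
    (hconn : ∀ k i j, ∃ s, k ≤ s ∧ s < k + κ ∧ η ≤ W s i j) {K : ℕ} (hκK : κ ≤ K) (k : ℕ) :
    spread (x (k + K)) ≤ (1 - 2 * η ^ K) * spread (x k) := by
  have hx : ∀ m, x (k + m) = transitionMatrix W k m *ᵥ x k := fun m => by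
    induction m with
    | zero => simp [transitionMatrix]
    | succ m ih => rw [← add_assoc, hrec, ih, transitionMatrix, mulVec_mulVec]
  rw [hx]
  refine spread_mulVec_le (transitionMatrix_mem_rowStochastic hW k K) (fun i j => ?_) (x k)
  refine le_transitionMatrix_apply_of_le hW (m := κ) (fun i j => ?_) hκK i j
  obtain ⟨s, hks, hsκ, hs⟩ := hconn k i j
  exact (pow_le_pow_of_le_one hη0 hη1 hκK).trans
    (pow_le_transitionMatrix_apply hW hη0 hdiag hs hks hsκ)

lemma spread_succ_le_geometric {η : ℝ} (hη0 : 0 < η) (hη1 : η < 1)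
    (hdiag : ∀ k i, η ≤ W k i i) {κ : ℕ} (hconn : ∀ k i j, ∃ s, k ≤ s ∧ s < k + κ ∧ η ≤ W s i j)
    {K : ℕ} (hκK : κ ≤ K) (hK : 0 < K) (k : ℕ) :
    spread (x (k + 1)) ≤ 2 / (1 - η ^ K) * ((1 - η ^ K) ^ ((K : ℝ)⁻¹)) ^ k *
      univ.sup' univ_nonempty (fun j => |x 0 j|) := by
  set β := (1 - η ^ K) ^ ((K : ℝ)⁻¹)
  set M := univ.sup' univ_nonempty (fun j => |x 0 j|)
  have hc0 : 0 < η ^ K := pow_pos hη0 K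
  have hc1 : 0 < 1 - η ^ K := sub_pos.2 (pow_lt_one₀ hη0.le hη1 hK.ne')
  have hβK : β ^ K = 1 - η ^ K := Real.rpow_inv_natCast_pow hc1.le hK.ne'
  have hβ0 : 0 ≤ β := Real.rpow_nonneg hc1.le _
  have hβ1 : β ≤ 1 := Real.rpow_le_one hc1.le (by linarith) (by positivity)
  have hstep (k : ℕ) : spread (x (k + K)) ≤ β ^ K * spread (x k) := by
    rw [hβK]
    exact (spread_add_le hrec hW hη0.le hη1.le hdiag hconn hκK k).trans
      (mul_le_mul_of_nonneg_right (by linarith) (spread_nonneg _))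
  rw [show 2 / (1 - η ^ K) * β ^ k * M = 2 * β ^ k * M / (1 - η ^ K) by ring, le_div_iff₀ hc1]
  calc spread (x (k + 1)) * (1 - η ^ K) = β ^ K * spread (x (k + 1)) := by rw [hβK, mul_comm]
    _ ≤ β ^ (k + 1) * spread (x 0) :=
      pow_mul_le_pow_mul_of_antitone (antitone_spread hrec hW) (spread_nonneg _) hβ0 hβ1 hK
        hstep (k + 1)
    _ ≤ β ^ k * (2 * M) :=
      mul_le_mul (pow_le_pow_of_le_one hβ0 hβ1 k.le_succ) (spread_le_two_mul_sup'_abs _)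
        (spread_nonneg _) (pow_nonneg hβ0 k)
    _ = 2 * β ^ k * M := by ring

end Consensus

theorem consensus_geometric_convergence_general
    {n : ℕ} (hn : 0 < n)
    (η : ℝ) (hη : η ∈ Set.Ioo (0 : ℝ) 1) (κ : ℕ) (hκ : 1 ≤ κ)
    (W : ℕ → Matrix (Fin n) (Fin n) ℝ)
    (hWnonneg : ∀ k i j, 0 ≤ W k i j)
    (hWrow : ∀ k i, ∑ j, W k i j = 1)
    (hWcol : ∀ k j, ∑ i, W k i j = 1)
    (hWdiag : ∀ k i, η ≤ W k i i)
    (hWconn : ∀ k, ∀ i j : Fin n, ∃ s, k ≤ s ∧ s < k + κ ∧ η ≤ W s i j)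
    (lam : ℕ → Fin n → ℝ)
    (hrec : ∀ k, ∀ i, lam (k + 1) i = ∑ j, W k i j * lam k j)
    (K₀ : ℕ) (hK₀ : K₀ = (n - 1) * κ)
    (β μ : ℝ)
    (hβ : β = (1 - η ^ K₀) ^ ((K₀ : ℝ)⁻¹))
    (hμ : μ = 2 * (1 + (η ^ K₀)⁻¹) / (1 - η ^ K₀))
    (lamstar : ℝ) (hlamstar : lamstar = (n : ℝ)⁻¹ * ∑ j, lam 0 j) :
    (∀ i : Fin n, ∀ k : ℕ,
      |lam (k + 1) i - lamstar| ≤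
        (n : ℝ) * μ * β ^ k *
          Finset.univ.sup' (Finset.univ_nonempty_iff.mpr ⟨⟨0, hn⟩⟩) (fun j => |lam 0 j|)) ∧
      ∀ i : Fin n, Tendsto (fun k => lam k i) atTop (nhds lamstar) := by
  obtain ⟨hη0, hη1⟩ := hη
  have : Nonempty (Fin n) := ⟨⟨0, hn⟩⟩
  have hmulVec : ∀ k, lam (k + 1) = W k *ᵥ lam k := fun k => funext (hrec k)
  have hdev k i : |lam k i - lamstar| ≤ spread (lam k) := by
    simpa [hlamstar] using abs_sub_initial_average_le_spread hmulVec
      (fun k => mem_colStochastic_iff_sum.2 ⟨hWnonneg k, hWcol k⟩) k i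
  set M := univ.sup' univ_nonempty fun j => |lam 0 j|
  rcases Nat.eq_zero_or_pos K₀ with hK | hK
  -- `K₀ = 0` forces `n = 1`; then `μ = 2 * 2 / 0 = 0` and both sides of the estimate vanish.
  · obtain rfl : n = 1 := by
      rcases Nat.mul_eq_zero.1 (hK₀ ▸ hK) with h | h <;> omega
    have hconst k i : lam k i = lamstar :=
      sub_eq_zero.1 (by simpa [spread_eq_zero] using hdev k i)
    simp [hconst, hμ, hK]
  have hκK : κ ≤ K₀ := hK₀ ▸ Nat.le_mul_of_pos_left κ (Nat.pos_of_mul_pos_right (hK₀ ▸ hK))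
  have hc0 : 0 < η ^ K₀ := pow_pos hη0 K₀
  have hc1 : η ^ K₀ < 1 := pow_lt_one₀ hη0.le hη1 hK.ne'
  have hβ0 : 0 ≤ β := hβ ▸ Real.rpow_nonneg (by linarith) _
  have hβ1 : β < 1 := hβ ▸ Real.rpow_lt_one (by linarith) (by linarith) (by positivity)
  have hμ2 : 2 / (1 - η ^ K₀) ≤ n * μ := by
    refine hμ ▸ (div_le_div_of_nonneg_right (by linarith [inv_pos.2 hc0]) (by linarith)).trans
      (le_mul_of_one_le_left (by positivity) (by exact_mod_cast hn))
  have hbound i k : |lam (k + 1) i - lamstar| ≤ n * μ * β ^ k * M := by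
    refine (hdev _ i).trans ((spread_succ_le_geometric hmulVec (fun k =>
      mem_rowStochastic_iff_sum.2 ⟨hWnonneg k, hWrow k⟩) hη0 hη1 hWdiag hWconn hκK hK k).trans ?_)
    rw [← hβ]
    gcongr
    exact le_sup'_of_le _ (mem_univ ⟨0, hn⟩) (abs_nonneg _)
  refine ⟨hbound, fun i => (tendsto_add_atTop_iff_nat 1).1 ?_⟩
  rw [tendsto_iff_norm_sub_tendsto_zero]
  refine squeeze_zero (fun _ => norm_nonneg _) (hbound i) ?_
  simpa using ((tendsto_pow_atTop_nhds_zero_of_lt_one hβ0 hβ1).const_mul (n * μ)).mul_const M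

/-- Theorem 1(a) together with estimate (4-4): under the network assumptions,
the scalar consensus iteration `λᵢ(k+1) = Σⱼ W(k)ᵢⱼ λⱼ(k)` satisfies
`|λᵢ(k+1) − λ*| ≤ n·μ·βᵏ·maxⱼ |λⱼ(0)|` where `λ* = (1/n) Σⱼ λⱼ(0)`; in particular
`λᵢ(k) → λ*` for every `i`. -/
theorem consensus_geometric_convergence
    {n : ℕ} (hn : 0 < n)
    (η : ℝ) (hη : η ∈ Set.Ioo (0 : ℝ) 1) (κ : ℕ) (hκ : 1 ≤ κ)
    (W : ℕ → Matrix (Fin n) (Fin n) ℝ)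
    (hWnonneg : ∀ k i j, 0 ≤ W k i j)
    (hWrow : ∀ k i, ∑ j, W k i j = 1)
    (hWcol : ∀ k j, ∑ i, W k i j = 1)
    (hWdiag : ∀ k i, η ≤ W k i i)
    (hWpos : ∀ k i j, W k i j ≠ 0 → η ≤ W k i j)
    (hWconn : ∀ k, ∀ i j : Fin n, ∃ s, k ≤ s ∧ s < k + κ ∧ η ≤ W s i j)
    (lam : ℕ → Fin n → ℝ)
    (hrec : ∀ k, ∀ i, lam (k + 1) i = ∑ j, W k i j * lam k j)
    (K₀ : ℕ) (hK₀ : K₀ = (n - 1) * κ)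
    (β μ : ℝ)
    (hβ : β = (1 - η ^ K₀) ^ ((K₀ : ℝ)⁻¹))
    (hμ : μ = 2 * (1 + (η ^ K₀)⁻¹) / (1 - η ^ K₀))
    (lamstar : ℝ) (hlamstar : lamstar = (n : ℝ)⁻¹ * ∑ j, lam 0 j) :
    (∀ i : Fin n, ∀ k : ℕ,
      |lam (k + 1) i - lamstar| ≤
        (n : ℝ) * μ * β ^ k *
          Finset.univ.sup' (Finset.univ_nonempty_iff.mpr ⟨⟨0, hn⟩⟩) (fun j => |lam 0 j|)) ∧
      ∀ i : Fin n, Tendsto (fun k => lam k i) atTop (nhds lamstar) :=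
  consensus_geometric_convergence_general hn η hη κ hκ W hWnonneg hWrow hWcol hWdiag hWconn lam hrec
    K₀ hK₀ β μ hβ hμ lamstar hlamstar
end

section
/- If Ω ⊆ ℝ^p is convex, L and R are convex real-valued functions on ℝ^p, and x* ∈ Ω is a Pareto optimal solution of minimizing the interval-valued function G = [L, R] over Ω, then there exists λ ∈ [0,1] such that λ·L(x*) + (1−λ)·R(x*) ≤ λ·L(x) + (1−λ)·R(x) for all x ∈ Ω. -/
/-! Separate the attainable set `{(a, b) | ∃ x ∈ Ω, L x ≤ a ∧ R x ≤ b}`, which is convex because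
`L` and `R` are, from the open quadrant of points strictly below `(L x*, R x*)`, which it misses
by Pareto optimality. The separating functional is nonpositive on the closed lower quadrant at
`(L x*, R x*)`, so its two coefficients are nonnegative and not both zero; normalised, they give
the weights `λ, 1 - λ`. -/

open Set

def upperImage {E : Type*} (Ω : Set E) (L R : E → ℝ) : Set (ℝ × ℝ) :=
  {q | ∃ x ∈ Ω, L x ≤ q.1 ∧ R x ≤ q.2}

theorem ConvexOn.convex_upperImage {E : Type*} [AddCommGroup E] [Module ℝ E] {Ω : Set E}
    {L R : E → ℝ} (hL : ConvexOn ℝ Ω L) (hR : ConvexOn ℝ Ω R) :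
    Convex ℝ (upperImage Ω L R) := by
  rintro q₁ ⟨x₁, hx₁, hL₁, hR₁⟩ q₂ ⟨x₂, hx₂, hL₂, hR₂⟩ a b ha hb hab
  refine ⟨a • x₁ + b • x₂, hL.1 hx₁ hx₂ ha hb hab, ?_, ?_⟩
  · calc L (a • x₁ + b • x₂) ≤ a * L x₁ + b * L x₂ := hL.2 hx₁ hx₂ ha hb hab
      _ ≤ a * q₁.1 + b * q₂.1 := by gcongr
      _ = (a • q₁ + b • q₂).1 := by simp
  · calc R (a • x₁ + b • x₂) ≤ a * R x₁ + b * R x₂ := hR.2 hx₁ hx₂ ha hb hab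
      _ ≤ a * q₁.2 + b * q₂.2 := by gcongr
      _ = (a • q₁ + b • q₂).2 := by simp

theorem ContinuousLinearMap.apply_prod_eq (f : ℝ × ℝ →L[ℝ] ℝ) (q : ℝ × ℝ) :
    f q = q.1 * f (1, 0) + q.2 * f (0, 1) := by
  conv_lhs => rw [show q = q.1 • ((1 : ℝ), (0 : ℝ)) + q.2 • ((0 : ℝ), (1 : ℝ)) by ext <;> simp]
  simp only [map_add, map_smul, smul_eq_mul]

theorem Convex.exists_weighted_sum_le_of_disjoint_Iio_prod_Iio {A : Set (ℝ × ℝ)}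
    (hA : Convex ℝ A) {c : ℝ × ℝ} (hc : c ∈ A) (hdisj : Disjoint (Iio c.1 ×ˢ Iio c.2) A) :
    ∃ w ∈ Icc (0 : ℝ) 1, ∀ q ∈ A, w * c.1 + (1 - w) * c.2 ≤ w * q.1 + (1 - w) * q.2 := by
  obtain ⟨f, u, hbelow, hA_above⟩ := geometric_hahn_banach_open
    ((convex_Iio _).prod (convex_Iio _)) (isOpen_Iio.prod isOpen_Iio) hA hdisj
  have hclosure : ∀ q ∈ Iic c.1 ×ˢ Iic c.2, f q ≤ u := by
    rw [← closure_Iio, ← closure_Iio, ← closure_prod_eq]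
    exact closure_minimal (fun q hq => (hbelow q hq).le) (isClosed_le f.continuous continuous_const)
  have hcu : f c = u := le_antisymm (hclosure c ⟨self_mem_Iic, self_mem_Iic⟩) (hA_above c hc)
  have h₁ : 0 ≤ f (1, 0) := by
    have := hclosure (c - (1, 0)) ⟨by simp, by simp⟩
    rw [map_sub] at this
    linarith
  have h₂ : 0 ≤ f (0, 1) := by
    have := hclosure (c - (0, 1)) ⟨by simp, by simp⟩
    rw [map_sub] at this
    linarith
  have h₁₂ : 0 < f (1, 0) + f (0, 1) := by
    have := hbelow (c - (1, 1)) ⟨by simp, by simp⟩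
    rw [map_sub, show ((1 : ℝ), (1 : ℝ)) = (1, 0) + (0, 1) by simp, map_add] at this
    linarith
  refine ⟨f (1, 0) / (f (1, 0) + f (0, 1)), ⟨by positivity, (div_le_one h₁₂).2 (by linarith)⟩,
    fun q hq => ?_⟩
  have hcq : f c ≤ f q := hcu ▸ hA_above q hq
  rw [f.apply_prod_eq c, f.apply_prod_eq q] at hcq
  rw [one_sub_div h₁₂.ne', add_sub_cancel_left]
  simp only [div_mul_eq_mul_div, ← add_div]
  exact div_le_div_of_nonneg_right (by linarith) h₁₂.le

theorem pareto_implies_scalarization_optimal_general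
    {p : ℕ} (Ω : Set (EuclideanSpace ℝ (Fin p))) (hΩ : Convex ℝ Ω)
    (L R : EuclideanSpace ℝ (Fin p) → ℝ)
    (hLconv : ConvexOn ℝ Set.univ L) (hRconv : ConvexOn ℝ Set.univ R)
    (xstar : EuclideanSpace ℝ (Fin p)) (hxstar : xstar ∈ Ω)
    (hpareto : ∀ xbar ∈ Ω, L xbar ≤ L xstar → R xbar ≤ R xstar →
      L xstar ≤ L xbar ∧ R xstar ≤ R xbar) :
    ∃ lam ∈ Set.Icc (0 : ℝ) 1,
      ∀ x ∈ Ω, lam * L xstar + (1 - lam) * R xstar ≤ lam * L x + (1 - lam) * R x := by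
  have hconvex : Convex ℝ (upperImage Ω L R) :=
    (hLconv.subset (subset_univ Ω) hΩ).convex_upperImage (hRconv.subset (subset_univ Ω) hΩ)
  have hdisj : Disjoint (Iio (L xstar) ×ˢ Iio (R xstar)) (upperImage Ω L R) := by
    refine disjoint_left.2 fun q ⟨hq₁, hq₂⟩ ⟨x, hx, hLx, hRx⟩ => ?_
    have := hpareto x hx (hLx.trans hq₁.out.le) (hRx.trans hq₂.out.le)
    linarith [hq₁.out]
  obtain ⟨w, hw, hmin⟩ := hconvex.exists_weighted_sum_le_of_disjoint_Iio_prod_Iio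
    (c := (L xstar, R xstar)) ⟨xstar, hxstar, le_rfl, le_rfl⟩ hdisj
  exact ⟨w, hw, fun x hx => hmin (L x, R x) ⟨x, hx, le_rfl, le_rfl⟩⟩

/-- Lemma 5(b): if `Ω` is convex, `L` and `R` are convex, and `x*` is a Pareto
optimal solution of minimizing the interval-valued function `G = [L, R]` over `Ω`,
then there is `λ ∈ [0,1]` such that `x*` minimizes `λ·L + (1−λ)·R` over `Ω`. -/
theorem pareto_implies_scalarization_optimal
    {p : ℕ} (Ω : Set (EuclideanSpace ℝ (Fin p))) (hΩ : Convex ℝ Ω)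
    (L R : EuclideanSpace ℝ (Fin p) → ℝ)
    (hLconv : ConvexOn ℝ Set.univ L) (hRconv : ConvexOn ℝ Set.univ R)
    (hLR : ∀ x, L x ≤ R x)
    (xstar : EuclideanSpace ℝ (Fin p)) (hxstar : xstar ∈ Ω)
    (hpareto : ∀ xbar ∈ Ω, L xbar ≤ L xstar → R xbar ≤ R xstar →
      L xstar ≤ L xbar ∧ R xstar ≤ R xbar) :
    ∃ lam ∈ Set.Icc (0 : ℝ) 1,
      ∀ x ∈ Ω, lam * L xstar + (1 - lam) * R xstar ≤ lam * L x + (1 - lam) * R x :=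
  pareto_implies_scalarization_optimal_general Ω hΩ L R hLconv hRconv xstar hxstar hpareto
end

section
/- Explicit consensus-error bound for perturbed consensus: suppose the matrices W(k) satisfy the network assumptions with constants K₀ = (n−1)κ, β = (1 − η^{K₀})^{1/K₀}, μ = 2(1 + η^{−K₀})/(1 − η^{K₀}), D ≥ 0, ι : ℕ → [0,∞), and x_i, p_i : ℕ → ℝ^p (i = 1,…,n) satisfy x_i(k+1) = Σ_{j=1}^n W(k)_{ij} x_j(k) + p_i(k+1) with ‖p_i(k+1)‖ ≤ ι(k)·D for all i and k ≥ 0. Then, with x̄(k) = (1/n) Σ_{j=1}^n x_j(k), for all i and k ≥ 0: ‖x_i(k+1) − x̄(k+1)‖ ≤ n·μ·β^{k}·max_{1≤j≤n}‖x_j(0)‖ + 2·ι(k)·D + n·μ·D·Σ_{s=1}^{k} β^{k−s} ι(s−1). -/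
/-!
Unrolling the recursion through the transition matrices `Φ(k, s) = W (k - 1) ⋯ W s` writes
`x (k + 1)` as `Φ(k + 1, 0)` applied to `x 0` plus `Φ(k + 1, s)` applied to each perturbation
`q s`. Columns of `Φ` sum to `1`, so the deviation of `Φ x` from its average is
`∑ⱼ (Φᵢⱼ - 1/n) xⱼ`, and it suffices to bound `|Φᵢⱼ - 1/n|`, which is at most the spread
`maxᵢ Φᵢⱼ - minᵢ Φᵢⱼ` of the `j`-th column.

Since the diagonal entries are at least `η`, an edge `η ≤ W t i j` survives in any product over a
window containing `t`; by connectivity every product of `κ` consecutive matrices therefore has all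
entries `≥ η^κ`, and each such block shrinks column spreads by the factor `1 - η^κ`. Hence
`|Φ(s + m, s)ᵢⱼ - 1/n| ≤ (1 - η^κ)^⌊m/κ⌋ ≤ μ β^(m-1)`, the last step comparing exponents via
`β^K₀ = 1 - η^K₀`. The perturbation injected at the last step is not mixed at all and
contributes `2 ι(k) D`.
-/

open Finset Matrix

namespace PerturbedConsensus

variable {ι : Type*} [Fintype ι]

lemma pow_div_le_inv_mul_rpow_pow {c : ℝ} (hc₀ : 0 < c) (hc₁ : c ≤ 1) {κ K : ℕ} (hκ : 0 < κ)
    (hκK : κ ≤ K) (m : ℕ) : c ^ ((m + 1) / κ) ≤ c⁻¹ * (c ^ (K : ℝ)⁻¹) ^ m := by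
  set β := c ^ (K : ℝ)⁻¹
  have hβK : β ^ K = c := Real.rpow_inv_natCast_pow hc₀.le (by omega)
  have hβ₀ : 0 ≤ β := by positivity
  have hβ₁ : β ≤ 1 := Real.rpow_le_one hc₀.le hc₁ (by positivity)
  have hexp : m ≤ K * ((m + 1) / κ + 1) :=
    ((Nat.lt_mul_div_succ (m + 1) hκ).le.trans (Nat.mul_le_mul_right _ hκK)).trans' (by omega)
  rw [le_inv_mul_iff₀ hc₀, ← pow_succ', ← hβK, ← pow_mul]
  exact pow_le_pow_of_le_one hβ₀ hβ₁ hexp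

lemma abs_sub_inv_card_mul_sum_le {v : ι → ℝ} {δ : ℝ} (hv : ∀ i i', v i - v i' ≤ δ) (i : ι) :
    |v i - (Fintype.card ι : ℝ)⁻¹ * ∑ i', v i'| ≤ δ := by
  have hc : 0 < (Fintype.card ι : ℝ) := Nat.cast_pos.2 (Fintype.card_pos_iff.2 ⟨i⟩)
  have upper : ∑ i', (v i - v i') ≤ ∑ _i' : ι, δ := sum_le_sum fun i' _ => hv i i'
  have lower : ∑ i', (v i' - v i) ≤ ∑ _i' : ι, δ := sum_le_sum fun i' _ => hv i' i
  simp only [sum_sub_distrib, sum_const, card_univ, nsmul_eq_mul] at upper lower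
  have : v i - (Fintype.card ι : ℝ)⁻¹ * ∑ i', v i' =
      (Fintype.card ι : ℝ)⁻¹ * (Fintype.card ι * v i - ∑ i', v i') := by
    field_simp
  rw [this, abs_mul, abs_inv, abs_of_pos hc, inv_mul_le_iff₀ hc, abs_le]
  constructor <;> linarith

lemma apply_mul_apply_le_mul_apply {A B : Matrix ι ι ℝ} (hA : ∀ i j, 0 ≤ A i j)
    (hB : ∀ i j, 0 ≤ B i j) (i l j : ι) : A i l * B l j ≤ (A * B) i j :=
  single_le_sum (f := fun t => A i t * B t j) (fun t _ => mul_nonneg (hA i t) (hB t j))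
    (mem_univ l)

section Action

variable {R V : Type*} [CommSemiring R] [AddCommMonoid V] [Module R V]

def act (A : Matrix ι ι R) : (ι → V) →ₗ[R] (ι → V) :=
  LinearMap.pi fun i => ∑ j, A i j • LinearMap.proj j

@[simp] lemma act_apply (A : Matrix ι ι R) (x : ι → V) (i : ι) :
    act A x i = ∑ j, A i j • x j := by
  simp [act]

lemma act_mul (A B : Matrix ι ι R) :
    act (A * B) = (act A ∘ₗ act B : (ι → V) →ₗ[R] (ι → V)) := by
  refine LinearMap.ext fun x => funext fun i => ?_
  simp only [act_apply, LinearMap.comp_apply, mul_apply, sum_smul, smul_sum, mul_smul]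
  exact sum_comm

end Action

section ConsensusError

variable {V : Type*} [SeminormedAddCommGroup V] [NormedSpace ℝ V]

noncomputable def consensusError (i : ι) : (ι → V) →ₗ[ℝ] V :=
  LinearMap.proj i - (Fintype.card ι : ℝ)⁻¹ • ∑ j, LinearMap.proj j

@[simp] lemma consensusError_apply (i : ι) (y : ι → V) :
    consensusError i y = y i - (Fintype.card ι : ℝ)⁻¹ • ∑ j, y j := by
  simp [consensusError]

lemma norm_consensusError_le {y : ι → V} {r : ℝ} (hy : ∀ j, ‖y j‖ ≤ r) (i : ι) :
    ‖consensusError i y‖ ≤ 2 * r := by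
  have hc : 0 < (Fintype.card ι : ℝ) := Nat.cast_pos.2 (Fintype.card_pos_iff.2 ⟨i⟩)
  have hsum : ‖∑ j, y j‖ ≤ Fintype.card ι * r :=
    (norm_sum_le _ _).trans ((sum_le_sum fun j _ => hy j).trans_eq (by simp))
  calc ‖consensusError i y‖ ≤ ‖y i‖ + (Fintype.card ι : ℝ)⁻¹ * ‖∑ j, y j‖ := by
        rw [consensusError_apply]
        refine (norm_sub_le _ _).trans_eq ?_
        rw [norm_smul, Real.norm_eq_abs, abs_of_pos (inv_pos.2 hc)]
    _ ≤ r + (Fintype.card ι : ℝ)⁻¹ * (Fintype.card ι * r) := by gcongr; exact hy i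
    _ = 2 * r := by field_simp; ring

end ConsensusError

variable [DecidableEq ι]

lemma mulVec_apply_le_sub {A : Matrix ι ι ℝ} (hA : A ∈ rowStochastic ℝ ι) {v : ι → ℝ} {M : ℝ}
    (hv : ∀ j, v j ≤ M) (i j₀ : ι) : (A *ᵥ v) i ≤ M - A i j₀ * (M - v j₀) := by
  have hgap : M - (A *ᵥ v) i = ∑ j, A i j * (M - v j) := by
    simp only [mulVec, dotProduct, mul_sub, sum_sub_distrib, ← sum_mul,
      sum_row_of_mem_rowStochastic hA, one_mul]
  have := single_le_sum (f := fun j => A i j * (M - v j))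
    (fun j _ => mul_nonneg (nonneg_of_mem_rowStochastic hA) (sub_nonneg.2 (hv j))) (mem_univ j₀)
  linarith

lemma mulVec_apply_sub_le {A : Matrix ι ι ℝ} (hA : A ∈ rowStochastic ℝ ι) {ε δ : ℝ}
    (hε : ∀ i j, ε ≤ A i j) {v : ι → ℝ} (hv : ∀ j j', v j - v j' ≤ δ) (i i' : ι) :
    (A *ᵥ v) i - (A *ᵥ v) i' ≤ (1 - ε) * δ := by
  have : Nonempty ι := ⟨i⟩
  obtain ⟨j₀, hj₀⟩ := Finite.exists_min v
  obtain ⟨j₁, hj₁⟩ := Finite.exists_max v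
  have upper := mulVec_apply_le_sub hA hj₁ i j₀
  have lower := mulVec_apply_le_sub hA (v := -v) (fun j => neg_le_neg (hj₀ j)) i' j₁
  simp only [mulVec_neg, Pi.neg_apply] at lower
  have hd : v j₁ - v j₀ ≤ δ := hv j₁ j₀
  have hd₀ : 0 ≤ v j₁ - v j₀ := sub_nonneg.2 (hj₀ j₁)
  nlinarith [mul_nonneg (nonneg_of_mem_rowStochastic hA (i := i') (j := j₁)) hd₀,
    mul_nonneg (sub_nonneg.2 (le_one_of_mem_rowStochastic hA (i := i) (j := j₀)))
      (sub_nonneg.2 hd),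
    mul_nonneg (sub_nonneg.2 (hε i j₀)) (hd₀.trans hd)]

section Transition

variable {R : Type*} [Semiring R] (W : ℕ → Matrix ι ι R)

/-- The state-transition matrix `Φ(s + m, s) = W (s + m - 1) * ⋯ * W (s + 1) * W s`. -/
def transition (s : ℕ) : ℕ → Matrix ι ι R
  | 0 => 1
  | m + 1 => W (s + m) * transition s m

@[simp] lemma transition_zero (s : ℕ) : transition W s 0 = 1 := rfl

lemma transition_succ (s m : ℕ) : transition W s (m + 1) = W (s + m) * transition W s m := rfl

lemma transition_add (s m l : ℕ) :
    transition W s (m + l) = transition W (s + m) l * transition W s m := by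
  induction l with
  | zero => simp
  | succ l ih => rw [← add_assoc, transition_succ, ih, transition_succ, Matrix.mul_assoc, add_assoc]

lemma transition_mem {S : Submonoid (Matrix ι ι R)} (hW : ∀ k, W k ∈ S) (s m : ℕ) :
    transition W s m ∈ S := by
  induction m with
  | zero => exact S.one_mem
  | succ m ih => exact S.mul_mem (hW _) ih

end Transition

section Unrolling

variable {R V : Type*} [CommSemiring R] [AddCommMonoid V] [Module R V]

lemma act_one : act (1 : Matrix ι ι R) = (LinearMap.id : (ι → V) →ₗ[R] (ι → V)) := by
  refine LinearMap.ext fun x => funext fun i => ?_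
  simp [one_apply]

lemma eq_act_transition_add_sum {W : ℕ → Matrix ι ι R} {x q : ℕ → ι → V}
    (hrec : ∀ k, x (k + 1) = act (W k) (x k) + q (k + 1)) (k : ℕ) :
    x k = act (transition W 0 k) (x 0) +
      ∑ s ∈ range k, act (transition W (s + 1) (k - 1 - s)) (q (s + 1)) := by
  induction k with
  | zero => simp [act_one]
  | succ k ih =>
    have hstep : ∀ s ∈ range k, act (W k) (act (transition W (s + 1) (k - 1 - s)) (q (s + 1))) =
        act (transition W (s + 1) (k + 1 - 1 - s)) (q (s + 1)) := by
      intro s hs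
      have hs : s < k := mem_range.1 hs
      rw [show k + 1 - 1 - s = k - 1 - s + 1 by omega, transition_succ,
        show s + 1 + (k - 1 - s) = k by omega, act_mul, LinearMap.comp_apply]
    rw [hrec, ih, map_add, map_sum, sum_congr rfl hstep, ← LinearMap.comp_apply, ← act_mul,
      sum_range_succ, Nat.add_sub_cancel, Nat.sub_self, transition_zero, act_one,
      LinearMap.id_apply, transition_succ, zero_add, add_assoc]

end Unrolling

section Positivity

variable {W : ℕ → Matrix ι ι ℝ} {η : ℝ}

lemma transition_nonneg (hW : ∀ k i j, 0 ≤ W k i j) (s m : ℕ) (i j : ι) :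
    0 ≤ transition W s m i j := by
  induction m generalizing i j with
  | zero => rw [transition_zero, one_apply]; split_ifs <;> norm_num
  | succ m ih => exact sum_nonneg fun l _ => mul_nonneg (hW _ _ _) (ih _ _)

lemma pow_le_transition_apply_self (hη : 0 ≤ η) (hW : ∀ k i j, 0 ≤ W k i j)
    (hdiag : ∀ k i, η ≤ W k i i) (s m : ℕ) (i : ι) : η ^ m ≤ transition W s m i i := by
  induction m with
  | zero => simp
  | succ m ih =>
    calc η ^ (m + 1) = η * η ^ m := pow_succ' η m
      _ ≤ W (s + m) i i * transition W s m i i :=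
        mul_le_mul (hdiag _ _) ih (by positivity) (hη.trans (hdiag _ _))
      _ ≤ transition W s (m + 1) i i :=
        apply_mul_apply_le_mul_apply (hW _) (transition_nonneg hW s m) i i i

lemma pow_le_transition_apply (hη : 0 ≤ η) (hW : ∀ k i j, 0 ≤ W k i j)
    (hdiag : ∀ k i, η ≤ W k i i) {s m t : ℕ} (hst : s ≤ t) (hts : t < s + m) {i j : ι}
    (hij : η ≤ W t i j) : η ^ m ≤ transition W s m i j := by
  obtain ⟨a, rfl⟩ := Nat.exists_eq_add_of_le hst
  obtain ⟨b, rfl⟩ : ∃ b, m = a + 1 + b := ⟨m - (a + 1), by omega⟩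
  have hT := transition_nonneg hW
  rw [transition_add]
  calc η ^ (a + 1 + b) = η ^ b * (η * η ^ a) := by ring
    _ ≤ transition W (s + (a + 1)) b i i * (W (s + a) i j * transition W s a j j) :=
      mul_le_mul (pow_le_transition_apply_self hη hW hdiag _ _ _)
        (mul_le_mul hij (pow_le_transition_apply_self hη hW hdiag _ _ _) (by positivity)
          (hη.trans hij)) (by positivity) (hT _ _ _ _)
    _ ≤ transition W (s + (a + 1)) b i i * transition W s (a + 1) i j :=
      mul_le_mul_of_nonneg_left (apply_mul_apply_le_mul_apply (hW _) (hT s a) i j j) (hT _ _ _ _)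
    _ ≤ _ := apply_mul_apply_le_mul_apply (hT _ _) (hT _ _) i i j

end Positivity

lemma transition_apply_sub_le {W : ℕ → Matrix ι ι ℝ} (hW : ∀ k, W k ∈ rowStochastic ℝ ι)
    {κ : ℕ} {ε : ℝ} (hε : ∀ s i j, ε ≤ transition W s κ i j) (s m : ℕ) (i i' j : ι) :
    transition W s m i j - transition W s m i' j ≤ (1 - ε) ^ (m / κ) := by
  have hT := transition_mem W hW
  suffices h : ∀ r m, r * κ ≤ m →
      ∀ i i', transition W s m i j - transition W s m i' j ≤ (1 - ε) ^ r from
    h _ m (Nat.div_mul_le_self m κ) i i'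
  intro r
  induction r with
  | zero =>
    intro m _ i i'
    have := le_one_of_mem_rowStochastic (hT s m) (i := i) (j := j)
    have := nonneg_of_mem_rowStochastic (hT s m) (i := i') (j := j)
    rw [pow_zero]
    linarith
  | succ r ih =>
    intro m hm i i'
    rw [add_one_mul] at hm
    obtain ⟨m, rfl⟩ := Nat.exists_eq_add_of_le' (le_of_add_le_right hm)
    rw [transition_add, pow_succ']
    exact mulVec_apply_sub_le (hT _ _) (hε _) (ih m (Nat.le_of_add_le_add_right hm)) i i'

theorem abs_transition_apply_sub_inv_card_le {W : ℕ → Matrix ι ι ℝ} {η : ℝ}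
    (hη : η ∈ Set.Ioo (0 : ℝ) 1) {κ : ℕ} (hκ : 1 ≤ κ) (hW : ∀ k, W k ∈ doublyStochastic ℝ ι)
    (hdiag : ∀ k i, η ≤ W k i i) (hconn : ∀ k, ∀ i j : ι, ∃ s, k ≤ s ∧ s < k + κ ∧ η ≤ W s i j)
    {K : ℕ} (hK : K = (Fintype.card ι - 1) * κ) (s m : ℕ) (i j : ι) :
    |transition W s (m + 1) i j - (Fintype.card ι : ℝ)⁻¹| ≤
      2 * (1 + (η ^ K)⁻¹) / (1 - η ^ K) * ((1 - η ^ K) ^ (K : ℝ)⁻¹) ^ m := by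
  obtain ⟨hη₀, hη₁⟩ := hη
  have hT := transition_mem W hW
  have ha₀ : 0 < η ^ K := pow_pos hη₀ K
  have ha₁ : η ^ K ≤ 1 := pow_le_one₀ hη₀.le hη₁.le
  suffices h : ∀ i i', transition W s (m + 1) i j - transition W s (m + 1) i' j ≤
      2 * (1 + (η ^ K)⁻¹) / (1 - η ^ K) * ((1 - η ^ K) ^ (K : ℝ)⁻¹) ^ m by
    simpa [sum_col_of_mem_doublyStochastic (hT s (m + 1))] using
      abs_sub_inv_card_mul_sum_le (v := fun i => transition W s (m + 1) i j) h i
  intro i i'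
  rcases (Fintype.card ι).lt_or_ge 2 with hcard | hcard
  · rw [Fintype.card_le_one_iff.1 (by omega) i i', sub_self]
    exact mul_nonneg (div_nonneg (by positivity) (sub_nonneg.2 ha₁))
      (pow_nonneg (Real.rpow_nonneg (sub_nonneg.2 ha₁) _) m)
  have hκK : κ ≤ K := hK ▸ Nat.le_mul_of_pos_left κ (by omega)
  have hc₀ : 0 < 1 - η ^ K := sub_pos.2 (pow_lt_one₀ hη₀.le hη₁ (by omega))
  have hrow : ∀ k, W k ∈ rowStochastic ℝ ι := fun k =>
    (mem_doublyStochastic_iff_mem_rowStochastic_and_mem_colStochastic.1 (hW k)).1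
  have hW₀ : ∀ k i j, 0 ≤ W k i j := fun k _ _ => nonneg_of_mem_doublyStochastic (hW k)
  have hblock : ∀ s i j, η ^ κ ≤ transition W s κ i j := fun s i j => by
    obtain ⟨t, hst, hts, hij⟩ := hconn s i j
    exact pow_le_transition_apply hη₀.le hW₀ hdiag hst hts hij
  calc _ ≤ (1 - η ^ κ) ^ ((m + 1) / κ) := transition_apply_sub_le hrow hblock s (m + 1) i i' j
    _ ≤ (1 - η ^ K) ^ ((m + 1) / κ) :=
      pow_le_pow_left₀ (sub_nonneg.2 (pow_le_one₀ hη₀.le hη₁.le))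
        (sub_le_sub_left (pow_le_pow_of_le_one hη₀.le hη₁.le hκK) 1) _
    _ ≤ (1 - η ^ K)⁻¹ * ((1 - η ^ K) ^ (K : ℝ)⁻¹) ^ m :=
      pow_div_le_inv_mul_rpow_pow hc₀ (by linarith) hκ hκK m
    _ ≤ _ := by
      rw [div_eq_mul_inv, mul_comm _ (1 - η ^ K)⁻¹]
      gcongr
      refine le_mul_of_one_le_right (inv_nonneg.2 hc₀.le) ?_
      linarith [inv_pos.2 ha₀]

section ConsensusErrorBound

variable {V : Type*} [SeminormedAddCommGroup V] [NormedSpace ℝ V]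

lemma consensusError_act {A : Matrix ι ι ℝ} (hA : A ∈ colStochastic ℝ ι) (y : ι → V) (i : ι) :
    consensusError i (act A y) = ∑ j, (A i j - (Fintype.card ι : ℝ)⁻¹) • y j := by
  have hsum : ∑ l, act A y l = ∑ j, y j := by
    simp only [act_apply]
    rw [sum_comm]
    simp [← sum_smul, sum_col_of_mem_colStochastic hA]
  rw [consensusError_apply, hsum]
  simp [sub_smul, smul_sum, sum_sub_distrib]

lemma norm_consensusError_act_le {A : Matrix ι ι ℝ} (hA : A ∈ colStochastic ℝ ι) {y : ι → V}
    {δ r : ℝ} {i : ι} (hAi : ∀ j, |A i j - (Fintype.card ι : ℝ)⁻¹| ≤ δ) (hy : ∀ j, ‖y j‖ ≤ r) :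
    ‖consensusError i (act A y)‖ ≤ Fintype.card ι * δ * r := by
  rw [consensusError_act hA]
  calc _ ≤ ∑ j, ‖(A i j - (Fintype.card ι : ℝ)⁻¹) • y j‖ := norm_sum_le _ _
    _ ≤ ∑ _j : ι, δ * r := sum_le_sum fun j _ => by
      rw [norm_smul, Real.norm_eq_abs]
      exact mul_le_mul (hAi j) (hy j) (norm_nonneg _) ((abs_nonneg _).trans (hAi j))
    _ = Fintype.card ι * δ * r := by simp [mul_assoc]

lemma norm_consensusError_succ_le {W : ℕ → Matrix ι ι ℝ} (hW : ∀ k, W k ∈ colStochastic ℝ ι)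
    {x q : ℕ → ι → V} (hrec : ∀ k, x (k + 1) = act (W k) (x k) + q (k + 1)) {i : ι}
    {f : ℕ → ℝ} (hdev : ∀ s m j, |transition W s (m + 1) i j - (Fintype.card ι : ℝ)⁻¹| ≤ f m)
    {M : ℝ} (hM : ∀ j, ‖x 0 j‖ ≤ M) {r : ℕ → ℝ} (hq : ∀ s j, ‖q (s + 1) j‖ ≤ r s) (k : ℕ) :
    ‖consensusError i (x (k + 1))‖ ≤ Fintype.card ι * f k * M +
      ∑ s ∈ range k, Fintype.card ι * f (k - 1 - s) * r s + 2 * r k := by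
  have hT := transition_mem W hW
  have hx : x (k + 1) = act (transition W 0 (k + 1)) (x 0) +
      ∑ s ∈ range k, act (transition W (s + 1) (k - s)) (q (s + 1)) + q (k + 1) := by
    rw [eq_act_transition_add_sum hrec, sum_range_succ, ← add_assoc]
    simp [act_one]
  rw [hx, map_add, map_add, map_sum]
  refine norm_add₃_le.trans (add_le_add_three ?_ ((norm_sum_le _ _).trans ?_) ?_)
  · exact norm_consensusError_act_le (hT 0 (k + 1)) (hdev 0 k) hM
  · refine sum_le_sum fun s hs => ?_
    rw [show k - s = k - 1 - s + 1 by have := mem_range.1 hs; omega]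
    exact norm_consensusError_act_le (hT _ _) (hdev _ _) (hq s)
  · exact norm_consensusError_le (hq k) i

end ConsensusErrorBound

end PerturbedConsensus

open PerturbedConsensus in
theorem perturbed_consensus_error_bound_general
    {p n : ℕ} (hn : 0 < n)
    (η : ℝ) (hη : η ∈ Set.Ioo (0 : ℝ) 1) (κ : ℕ) (hκ : 1 ≤ κ)
    (W : ℕ → Matrix (Fin n) (Fin n) ℝ)
    (hWnonneg : ∀ k i j, 0 ≤ W k i j)
    (hWrow : ∀ k i, ∑ j, W k i j = 1)
    (hWcol : ∀ k j, ∑ i, W k i j = 1)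
    (hWdiag : ∀ k i, η ≤ W k i i)
    (hWconn : ∀ k, ∀ i j : Fin n, ∃ s, k ≤ s ∧ s < k + κ ∧ η ≤ W s i j)
    (K₀ : ℕ) (hK₀ : K₀ = (n - 1) * κ)
    (β μ : ℝ)
    (hβ : β = (1 - η ^ K₀) ^ ((K₀ : ℝ)⁻¹))
    (hμ : μ = 2 * (1 + (η ^ K₀)⁻¹) / (1 - η ^ K₀))
    (D : ℝ)
    (ι : ℕ → ℝ)
    (x q : ℕ → Fin n → EuclideanSpace ℝ (Fin p))
    (hrec : ∀ k, ∀ i, x (k + 1) i = (∑ j, W k i j • x k j) + q (k + 1) i)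
    (hq : ∀ k, ∀ i, ‖q (k + 1) i‖ ≤ ι k * D) :
    ∀ i : Fin n, ∀ k : ℕ,
      ‖x (k + 1) i - (n : ℝ)⁻¹ • ∑ j, x (k + 1) j‖ ≤
        (n : ℝ) * μ * β ^ k *
            Finset.univ.sup' (Finset.univ_nonempty_iff.mpr ⟨⟨0, hn⟩⟩) (fun j => ‖x 0 j‖) +
          2 * ι k * D +
          (n : ℝ) * μ * D * ∑ s ∈ Finset.Icc 1 k, β ^ (k - s) * ι (s - 1) := by
  intro i k
  have hW : ∀ k, W k ∈ doublyStochastic ℝ (Fin n) := fun k =>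
    mem_doublyStochastic_iff_sum.2 ⟨hWnonneg k, hWrow k, hWcol k⟩
  have hWcol' : ∀ k, W k ∈ colStochastic ℝ (Fin n) := fun k =>
    (mem_doublyStochastic_iff_mem_rowStochastic_and_mem_colStochastic.1 (hW k)).2
  have hdev := abs_transition_apply_sub_inv_card_le hη hκ hW hWdiag hWconn (K := K₀)
    (by rw [hK₀, Fintype.card_fin])
  rw [← hβ, ← hμ] at hdev
  have hrec' : ∀ k, x (k + 1) = act (W k) (x k) + q (k + 1) := fun k =>
    funext fun i => by simp [hrec]
  have hM : ∀ j, ‖x 0 j‖ ≤ univ.sup' (univ_nonempty_iff.mpr ⟨⟨0, hn⟩⟩) fun j => ‖x 0 j‖ :=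
    fun j => le_sup' (fun j => ‖x 0 j‖) (mem_univ j)
  have hbound := norm_consensusError_succ_le hWcol' hrec' (hdev · · i) hM hq k
  have hsum : ∑ s ∈ Icc 1 k, β ^ (k - s) * ι (s - 1) = ∑ s ∈ range k, β ^ (k - 1 - s) * ι s := by
    rw [← Ico_add_one_right_eq_Icc, sum_Ico_eq_sum_range, Nat.add_sub_cancel]
    refine sum_congr rfl fun s _ => ?_
    rw [Nat.add_sub_cancel_left, Nat.sub_sub, add_comm 1 s]
  simp only [consensusError_apply, Fintype.card_fin] at hbound
  refine hbound.trans_eq ?_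
  rw [hsum, mul_sum, add_right_comm]
  congr 1
  · ring
  · exact sum_congr rfl fun s _ => by ring

/-- Estimate (B-7)/(B-8): explicit consensus-error bound for perturbed consensus:
`‖xᵢ(k+1) − x̄(k+1)‖ ≤ n·μ·βᵏ·maxⱼ‖xⱼ(0)‖ + 2·ι(k)·D + n·μ·D·Σ_{s=1}^{k} β^{k−s} ι(s−1)`. -/
theorem perturbed_consensus_error_bound
    {p n : ℕ} (hn : 0 < n)
    (η : ℝ) (hη : η ∈ Set.Ioo (0 : ℝ) 1) (κ : ℕ) (hκ : 1 ≤ κ)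
    (W : ℕ → Matrix (Fin n) (Fin n) ℝ)
    (hWnonneg : ∀ k i j, 0 ≤ W k i j)
    (hWrow : ∀ k i, ∑ j, W k i j = 1)
    (hWcol : ∀ k j, ∑ i, W k i j = 1)
    (hWdiag : ∀ k i, η ≤ W k i i)
    (hWpos : ∀ k i j, W k i j ≠ 0 → η ≤ W k i j)
    (hWconn : ∀ k, ∀ i j : Fin n, ∃ s, k ≤ s ∧ s < k + κ ∧ η ≤ W s i j)
    (K₀ : ℕ) (hK₀ : K₀ = (n - 1) * κ)
    (β μ : ℝ)
    (hβ : β = (1 - η ^ K₀) ^ ((K₀ : ℝ)⁻¹))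
    (hμ : μ = 2 * (1 + (η ^ K₀)⁻¹) / (1 - η ^ K₀))
    (D : ℝ) (hD : 0 ≤ D)
    (ι : ℕ → ℝ) (hιnonneg : ∀ k, 0 ≤ ι k)
    (x q : ℕ → Fin n → EuclideanSpace ℝ (Fin p))
    (hrec : ∀ k, ∀ i, x (k + 1) i = (∑ j, W k i j • x k j) + q (k + 1) i)
    (hq : ∀ k, ∀ i, ‖q (k + 1) i‖ ≤ ι k * D) :
    ∀ i : Fin n, ∀ k : ℕ,
      ‖x (k + 1) i - (n : ℝ)⁻¹ • ∑ j, x (k + 1) j‖ ≤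
        (n : ℝ) * μ * β ^ k *
            Finset.univ.sup' (Finset.univ_nonempty_iff.mpr ⟨⟨0, hn⟩⟩) (fun j => ‖x 0 j‖) +
          2 * ι k * D +
          (n : ℝ) * μ * D * ∑ s ∈ Finset.Icc 1 k, β ^ (k - s) * ι (s - 1) :=
  perturbed_consensus_error_bound_general hn η hη κ hκ W hWnonneg hWrow hWcol hWdiag hWconn K₀ hK₀ β
    μ hβ hμ D ι x q hrec hq
end

section
/- Lower bound for the cross term: let f : ℝ^p → ℝ be convex and C-Lipschitz, let ξ, x̄, x*, v ∈ ℝ^p, and let g be a subgradient of f at ξ + v. Then ⟨g, ξ − x*⟩ ≥ f(x̄) − f(x*) − C‖ξ − x̄‖ − 2C‖v‖. -/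
/-!
Evaluating the subgradient inequality at `ξ + v + u` and comparing with the Lipschitz bound gives
`⟨g, u⟩ ≤ C‖u‖` for every `u`. Then `⟨g, ξ − x*⟩ = ⟨g, ξ + v − x*⟩ − ⟨g, v⟩ ≥ f(ξ + v) − f(x*) − C‖v‖`,
and two Lipschitz steps `x̄ → ξ → ξ + v` give `f(ξ + v) ≥ f(x̄) − C‖ξ − x̄‖ − C‖v‖`.
No sign condition on `C` is needed, since `C` never multiplies an inequality.
-/

open RealInnerProductSpace

theorem inner_le_mul_norm_of_subgradient {E : Type*} [NormedAddCommGroup E]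
    [InnerProductSpace ℝ E] {f : E → ℝ} {C : ℝ} {z g : E} (hlip : ∀ x y, f x - f y ≤ C * ‖x - y‖)
    (hg : ∀ y, f z + ⟪g, y - z⟫ ≤ f y) (u : E) : ⟪g, u⟫ ≤ C * ‖u‖ := by
  have hsub := hg (z + u)
  have hlip_u := hlip (z + u) z
  rw [add_sub_cancel_left] at hsub hlip_u
  linarith

theorem cross_term_lower_bound_general
    {p : ℕ} (f : EuclideanSpace ℝ (Fin p) → ℝ) (C : ℝ)
    (hlip : ∀ x y, |f x - f y| ≤ C * ‖x - y‖)
    (ξ xbar xstar v g : EuclideanSpace ℝ (Fin p))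
    (hg : ∀ y, f (ξ + v) + ⟪g, y - (ξ + v)⟫ ≤ f y) :
    f xbar - f xstar - C * ‖ξ - xbar‖ - 2 * C * ‖v‖ ≤ ⟪g, ξ - xstar⟫ := by
  have hlip' : ∀ x y, f x - f y ≤ C * ‖x - y‖ := fun x y => (le_abs_self _).trans (hlip x y)
  have hgv : ⟪g, v⟫ ≤ C * ‖v‖ := inner_le_mul_norm_of_subgradient hlip' hg v
  have hsub : f (ξ + v) + ⟪g, xstar - (ξ + v)⟫ ≤ f xstar := hg xstar
  have hsplit : ⟪g, xstar - (ξ + v)⟫ = -⟪g, ξ - xstar⟫ - ⟪g, v⟫ := by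
    rw [← inner_neg_right, ← inner_sub_right]
    congr 1
    abel
  have hxbar : f xbar - f ξ ≤ C * ‖ξ - xbar‖ := by simpa [norm_sub_rev] using hlip' xbar ξ
  have hξ : f ξ - f (ξ + v) ≤ C * ‖v‖ := by simpa using hlip' ξ (ξ + v)
  linarith

/-- Inequality (C-6) (deterministic core of Lemma 10): if `g` is a subgradient of the
convex `C`-Lipschitz function `f` at `ξ + v`, then
`⟨g, ξ − x*⟩ ≥ f(x̄) − f(x*) − C‖ξ − x̄‖ − 2C‖v‖`. -/
theorem cross_term_lower_bound
    {p : ℕ} (f : EuclideanSpace ℝ (Fin p) → ℝ) (C : ℝ)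
    (hconv : ConvexOn ℝ Set.univ f)
    (hlip : ∀ x y, |f x - f y| ≤ C * ‖x - y‖)
    (ξ xbar xstar v g : EuclideanSpace ℝ (Fin p))
    (hg : ∀ y, f (ξ + v) + ⟪g, y - (ξ + v)⟫ ≤ f y) :
    f xbar - f xstar - C * ‖ξ - xbar‖ - 2 * C * ‖v‖ ≤ ⟪g, ξ - xstar⟫ :=
  cross_term_lower_bound_general f C hlip ξ xbar xstar v g hg
end

section
/- One-step consensus-error recursion for the projected step: let X ⊆ ℝ^p be nonempty, closed and convex with metric projection P_X, let W be an n×n doubly stochastic matrix with nonnegative entries, let x_1,…,x_n ∈ X, d_1,…,d_n ∈ ℝ^p and ι > 0. Set ξ_i = Σ_{j=1}^n W_{ij} x_j, x_i' = P_X(ξ_i − ι d_i), x̄ = (1/n) Σ_{i=1}^n x_i and x̄' = (1/n) Σ_{i=1}^n x_i'. Then Σ_{i=1}^n ‖x_i' − x̄'‖² ≤ Σ_{i=1}^n ‖x_i − x̄‖² + ι² Σ_{i=1}^n ‖d_i‖² + 2ι Σ_{i=1}^n ‖d_i‖ · ( Σ_{j=1}^n W_{ij} ‖x_j − x̄‖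 ). -/
/-!
Compare every node with the old average `x̄`, which lies in `X` by convexity. Replacing the new
average `x̄'` by `x̄` can only increase the spread, and the projection is nonexpansive towards
`x̄ ∈ X`, so `‖xᵢ' − x̄‖ ≤ ‖ξᵢ − x̄‖ + ι‖dᵢ‖ ≤ Σⱼ Wᵢⱼ‖xⱼ − x̄‖ + ι‖dᵢ‖`. Squaring and summing over `i`,
Jensen's inequality for the rows of `W` together with the column sums bounds
`Σᵢ (Σⱼ Wᵢⱼ‖xⱼ − x̄‖)²` by `Σⱼ ‖xⱼ − x̄‖²`.
-/

open Finset
open scoped RealInnerProductSpace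

section

variable {E α : Type*} [NormedAddCommGroup E] [InnerProductSpace ℝ E]

theorem Convex.inv_card_smul_sum_mem {K : Set E} (hK : Convex ℝ K) {s : Finset α}
    (hs : s.Nonempty) {z : α → E} (hz : ∀ i ∈ s, z i ∈ K) : (#s : ℝ)⁻¹ • ∑ i ∈ s, z i ∈ K := by
  simpa [Finset.centerMass] using
    hK.centerMass_mem (w := fun _ => (1 : ℝ)) (fun _ _ => zero_le_one) (by simpa using hs) hz

theorem norm_sub_le_norm_sub_of_forall_dist_le {K : Set E} (hK : Convex ℝ K) {z P y : E}
    (hP : P ∈ K) (hmin : ∀ w ∈ K, dist z P ≤ dist z w) (hy : y ∈ K) : ‖P - y‖ ≤ ‖z - y‖ := by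
  have : Nonempty K := ⟨⟨P, hP⟩⟩
  have hinf : ‖z - P‖ = ⨅ w : K, ‖z - w‖ :=
    le_antisymm (le_ciInf fun w => by simpa [dist_eq_norm] using hmin w w.2)
      (ciInf_le ⟨0, Set.forall_mem_range.mpr fun _ => norm_nonneg _⟩ (⟨P, hP⟩ : K))
  have hobtuse : ⟪z - P, y - P⟫ ≤ 0 := (norm_eq_iInf_iff_real_inner_le_zero hK hP).mp hinf y hy
  have hsplit : ‖z - y‖ ^ 2 = ‖z - P‖ ^ 2 - 2 * ⟪z - P, y - P⟫ + ‖P - y‖ ^ 2 := by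
    rw [← sub_add_sub_cancel z P y, norm_add_sq_real, ← neg_sub y P, inner_neg_right]
    ring
  refine (pow_le_pow_iff_left₀ (norm_nonneg _) (norm_nonneg _) two_ne_zero).mp ?_
  nlinarith [sq_nonneg ‖z - P‖]

theorem sum_norm_sub_mean_sq_le (s : Finset α) (a : α → E) (c : E) :
    ∑ i ∈ s, ‖a i - (#s : ℝ)⁻¹ • ∑ j ∈ s, a j‖ ^ 2 ≤ ∑ i ∈ s, ‖a i - c‖ ^ 2 := by
  set m := (#s : ℝ)⁻¹ • ∑ j ∈ s, a j
  have hm : ∑ i ∈ s, (a i - m) = 0 := by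
    rcases s.eq_empty_or_nonempty with rfl | hs
    · simp
    rw [sum_sub_distrib, sum_const, ← Nat.cast_smul_eq_nsmul ℝ, smul_smul,
      mul_inv_cancel₀ (by simpa using hs.ne_empty), one_smul, sub_self]
  have hsplit (i : α) :
      ‖a i - c‖ ^ 2 = ‖a i - m‖ ^ 2 + 2 * ⟪a i - m, m - c⟫ + ‖m - c‖ ^ 2 := by
    rw [← sub_add_sub_cancel (a i) m c, norm_add_sq_real]
  have hcross : ∑ i ∈ s, ⟪a i - m, m - c⟫ = 0 := by rw [← sum_inner, hm, inner_zero_left]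
  simp only [hsplit, sum_add_distrib, ← mul_sum, hcross]
  have : 0 ≤ ∑ _i ∈ s, ‖m - c‖ ^ 2 := sum_nonneg fun _ _ => sq_nonneg _
  linarith

theorem norm_sum_smul_sub_le {s : Finset α} {w : α → ℝ} (hw₀ : ∀ i ∈ s, 0 ≤ w i)
    (hw₁ : ∑ i ∈ s, w i = 1) (z : α → E) (c : E) :
    ‖∑ i ∈ s, w i • z i - c‖ ≤ ∑ i ∈ s, w i * ‖z i - c‖ := by
  have : ∑ i ∈ s, w i • z i - c = ∑ i ∈ s, w i • (z i - c) := by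
    simp only [smul_sub, sum_sub_distrib, ← sum_smul, hw₁, one_smul]
  rw [this]
  refine (norm_sum_le _ _).trans_eq (sum_congr rfl fun i hi => ?_)
  rw [norm_smul, Real.norm_of_nonneg (hw₀ i hi)]

theorem sum_sq_weighted_sum_le_sum_sq [Fintype α] {W : Matrix α α ℝ} (hW₀ : ∀ i j, 0 ≤ W i j)
    (hWrow : ∀ i, ∑ j, W i j = 1) (hWcol : ∀ j, ∑ i, W i j = 1) (a : α → ℝ) :
    ∑ i, (∑ j, W i j * a j) ^ 2 ≤ ∑ j, a j ^ 2 := by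
  have hjensen (i : α) : (∑ j, W i j * a j) ^ 2 ≤ ∑ j, W i j * a j ^ 2 := by
    simpa using (even_two.convexOn_pow (𝕜 := ℝ)).map_sum_le (t := univ) (w := W i) (p := a)
      (fun j _ => hW₀ i j) (hWrow i) (fun j _ => Set.mem_univ _)
  calc ∑ i, (∑ j, W i j * a j) ^ 2 ≤ ∑ i, ∑ j, W i j * a j ^ 2 := sum_le_sum fun i _ => hjensen i
    _ = ∑ j, a j ^ 2 := by rw [sum_comm]; simp only [← sum_mul, hWcol, one_mul]

end

theorem projected_consensus_recursion_general
    {p n : ℕ} (X : Set (EuclideanSpace ℝ (Fin p)))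
    (hXconv : Convex ℝ X)
    (PX : EuclideanSpace ℝ (Fin p) → EuclideanSpace ℝ (Fin p))
    (hPX : ∀ z, PX z ∈ X ∧ ∀ y ∈ X, dist z (PX z) ≤ dist z y)
    (W : Matrix (Fin n) (Fin n) ℝ)
    (hWnonneg : ∀ i j, 0 ≤ W i j)
    (hWrow : ∀ i, ∑ j, W i j = 1)
    (hWcol : ∀ j, ∑ i, W i j = 1)
    (x d : Fin n → EuclideanSpace ℝ (Fin p))
    (hx : ∀ i, x i ∈ X)
    (ι : ℝ) (hι : 0 < ι)
    (ξ x' : Fin n → EuclideanSpace ℝ (Fin p))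
    (hξ : ∀ i, ξ i = ∑ j, W i j • x j)
    (hx' : ∀ i, x' i = PX (ξ i - ι • d i))
    (xbar xbar' : EuclideanSpace ℝ (Fin p))
    (hxbar : xbar = (n : ℝ)⁻¹ • ∑ i, x i)
    (hxbar' : xbar' = (n : ℝ)⁻¹ • ∑ i, x' i) :
    ∑ i, ‖x' i - xbar'‖ ^ 2 ≤
      ∑ i, ‖x i - xbar‖ ^ 2 + ι ^ 2 * ∑ i, ‖d i‖ ^ 2 +
        2 * ι * ∑ i, ‖d i‖ * (∑ j, W i j * ‖x j - xbar‖) := by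
  rcases n.eq_zero_or_pos with rfl | hn
  · simp
  have hxbarX : xbar ∈ X := by
    simpa [hxbar] using hXconv.inv_card_smul_sum_mem (univ_nonempty_iff.mpr ⟨⟨0, hn⟩⟩)
      (fun i _ => hx i)
  set e : Fin n → ℝ := fun j => ‖x j - xbar‖
  have hstep (i : Fin n) : ‖x' i - xbar‖ ≤ ∑ j, W i j * e j + ι * ‖d i‖ :=
    calc ‖x' i - xbar‖ ≤ ‖(ξ i - xbar) - ι • d i‖ := by
          rw [hx' i, sub_right_comm]
          exact norm_sub_le_norm_sub_of_forall_dist_le hXconv (hPX _).1 (hPX _).2 hxbarX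
      _ ≤ ‖ξ i - xbar‖ + ι * ‖d i‖ := by
          exact (norm_sub_le _ _).trans_eq (by rw [norm_smul, Real.norm_of_nonneg hι.le])
      _ ≤ ∑ j, W i j * e j + ι * ‖d i‖ := by
          rw [hξ i]; gcongr; exact norm_sum_smul_sub_le (fun j _ => hWnonneg i j) (hWrow i) _ _
  calc ∑ i, ‖x' i - xbar'‖ ^ 2 ≤ ∑ i, ‖x' i - xbar‖ ^ 2 := by
        simpa [hxbar'] using sum_norm_sub_mean_sq_le univ x' xbar
    _ ≤ ∑ i, (∑ j, W i j * e j + ι * ‖d i‖) ^ 2 := by gcongr with i; exact hstep i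
    _ = ∑ i, ((∑ j, W i j * e j) ^ 2 + ι ^ 2 * ‖d i‖ ^ 2 +
          2 * ι * (‖d i‖ * ∑ j, W i j * e j)) := sum_congr rfl fun _ _ => by ring
    _ = ∑ i, (∑ j, W i j * e j) ^ 2 + ι ^ 2 * ∑ i, ‖d i‖ ^ 2 +
          2 * ι * ∑ i, ‖d i‖ * ∑ j, W i j * e j := by
        rw [sum_add_distrib, sum_add_distrib, mul_sum, mul_sum]
    _ ≤ _ := by gcongr ?_ + _ + _; exact sum_sq_weighted_sum_le_sum_sq hWnonneg hWrow hWcol e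

/-- Inequality (D-2): one-step consensus-error recursion for the projected step.
With `ξᵢ = Σⱼ Wᵢⱼ xⱼ`, `xᵢ' = P_X(ξᵢ − ι dᵢ)`, and `x̄, x̄'` the averages of the `xᵢ`
and `xᵢ'`, one has
`Σᵢ ‖xᵢ' − x̄'‖² ≤ Σᵢ ‖xᵢ − x̄‖² + ι² Σᵢ ‖dᵢ‖² + 2ι Σᵢ ‖dᵢ‖ (Σⱼ Wᵢⱼ ‖xⱼ − x̄‖)`. -/
theorem projected_consensus_recursion
    {p n : ℕ} (X : Set (EuclideanSpace ℝ (Fin p)))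
    (hXne : X.Nonempty) (hXclosed : IsClosed X) (hXconv : Convex ℝ X)
    (PX : EuclideanSpace ℝ (Fin p) → EuclideanSpace ℝ (Fin p))
    (hPX : ∀ z, PX z ∈ X ∧ ∀ y ∈ X, dist z (PX z) ≤ dist z y)
    (W : Matrix (Fin n) (Fin n) ℝ)
    (hWnonneg : ∀ i j, 0 ≤ W i j)
    (hWrow : ∀ i, ∑ j, W i j = 1)
    (hWcol : ∀ j, ∑ i, W i j = 1)
    (x d : Fin n → EuclideanSpace ℝ (Fin p))
    (hx : ∀ i, x i ∈ X)
    (ι : ℝ) (hι : 0 < ι)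
    (ξ x' : Fin n → EuclideanSpace ℝ (Fin p))
    (hξ : ∀ i, ξ i = ∑ j, W i j • x j)
    (hx' : ∀ i, x' i = PX (ξ i - ι • d i))
    (xbar xbar' : EuclideanSpace ℝ (Fin p))
    (hxbar : xbar = (n : ℝ)⁻¹ • ∑ i, x i)
    (hxbar' : xbar' = (n : ℝ)⁻¹ • ∑ i, x' i) :
    ∑ i, ‖x' i - xbar'‖ ^ 2 ≤
      ∑ i, ‖x i - xbar‖ ^ 2 + ι ^ 2 * ∑ i, ‖d i‖ ^ 2 +
        2 * ι * ∑ i, ‖d i‖ * (∑ j, W i j * ‖x j - xbar‖) :=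
  projected_consensus_recursion_general X hXconv PX hPX W hWnonneg hWrow hWcol x d hx ι hι ξ x' hξ
    hx' xbar xbar' hxbar hxbar'
end

section
/- Mean value theorem for convex functions via subgradients: let f : ℝ^p → ℝ be convex and let x, y ∈ ℝ^p with x ≠ y. Then there exist t ∈ (0,1) and a subgradient g of f at the point u = y + t(x − y) such that f(x) − f(y) = ⟨g, x − y⟩. -/
/-!
Along the segment, `φ s = f (y + s • (x - y)) - (f x - f y) * s` is convex with `φ 0 = φ 1`, so it
attains its global minimum at some `t ∈ (0, 1)`. With `u = y + t • (x - y)` this says that the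
affine function `a ↦ f u + a * (f x - f y)` lies below `f` on the line `u + ℝ (x - y)`. Separating
that line, lifted to the graph of the affine function, from the open epigraph of `f` by a hyperplane
yields a subgradient `g` of `f` at `u` whose slope along `x - y` is exactly `f x - f y`.
-/

open Set RealInnerProductSpace

theorem ConvexOn.exists_mem_Ioo_isMinOn_of_eq {φ : ℝ → ℝ} (hφ : ConvexOn ℝ univ φ) {a b : ℝ}
    (hab : a < b) (hφab : φ a = φ b) : ∃ t ∈ Ioo a b, IsMinOn φ univ t := by
  have hcont : Continuous φ := continuousOn_univ.1 (hφ.continuousOn isOpen_univ)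
  obtain ⟨t₀, ht₀, ht₀min⟩ :=
    isCompact_Icc.exists_isMinOn (nonempty_Icc.2 hab.le) hcont.continuousOn
  have hle_end : ∀ s ∈ Icc a b, φ s ≤ φ a := fun s hs => by
    have := hφ.le_on_segment trivial trivial (by rwa [segment_eq_Icc hab.le])
    rwa [← hφab, max_self] at this
  obtain ⟨t, ht, htmin⟩ : ∃ t ∈ Ioo a b, IsMinOn φ (Icc a b) t := by
    by_cases hint : t₀ ∈ Ioo a b
    · exact ⟨t₀, hint, ht₀min⟩
    -- a minimum at an endpoint makes `φ` constant on `[a, b]`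
    have hend : φ t₀ = φ a := by
      rcases eq_or_lt_of_le ht₀.1 with h | h
      · rw [h]
      · rw [eq_of_le_of_not_lt ht₀.2 fun h' => hint ⟨h, h'⟩, hφab]
    refine ⟨(a + b) / 2, ⟨by linarith, by linarith⟩, fun s hs => ?_⟩
    exact (hle_end _ ⟨by linarith, by linarith⟩).trans (hend ▸ ht₀min hs)
  have hloc : IsLocalMin φ t := htmin.isLocalMin (Icc_mem_nhds ht.1 ht.2)
  exact ⟨t, ht, fun s _ => IsMinOn.of_isLocalMin_of_convex_univ hloc hφ s⟩

theorem eq_zero_of_forall_le_add_mul {m b k : ℝ} (h : ∀ a : ℝ, m ≤ b + a * k) : k = 0 := by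
  by_contra hk
  have := h ((m - b - 1) / k)
  rw [div_mul_cancel₀ _ hk] at this
  linarith

section Subgradient

variable {E : Type*} [NormedAddCommGroup E] [NormedSpace ℝ E] {f : E → ℝ} {u d : E} {c : ℝ}

theorem exists_subgradient_of_separates_strictEpigraph_line {φ : StrongDual ℝ (E × ℝ)} {m : ℝ}
    (hφS : ∀ p : E × ℝ, f p.1 < p.2 → φ p < m)
    (hφT : ∀ a : ℝ, m ≤ φ (u + a • d, f u + a * c)) :
    ∃ G : StrongDual ℝ E, G d = c ∧ ∀ z, f u + G (z - u) ≤ f z := by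
  set ψ : StrongDual ℝ E := φ.comp (ContinuousLinearMap.inl ℝ E ℝ)
  set l : ℝ := φ (0, 1)
  have hφ_apply : ∀ z r, φ (z, r) = ψ z + r * l := fun z r => by
    rw [show (z, r) = (z, 0) + r • ((0 : E), (1 : ℝ)) by simp, map_add, map_smul, smul_eq_mul]
    rfl
  have hφu : m ≤ ψ u + f u * l := by simpa [hφ_apply] using hφT 0
  have hslope : ψ d + c * l = 0 :=
    eq_zero_of_forall_le_add_mul (m := m) (b := ψ u + f u * l) fun a => by
      have := hφT a
      rw [hφ_apply, map_add, map_smul, smul_eq_mul] at this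
      linarith
  have hl : 0 < -l := by
    have := hφS (u, f u + 1) (by simp)
    rw [hφ_apply] at this
    linarith
  have hsupport : ∀ z, ψ z - ψ u ≤ -l * (f z - f u) := fun z => by
    suffices ψ z + f z * l ≤ ψ u + f u * l by linarith
    refine le_of_forall_pos_lt_add fun ε hε => ?_
    -- at height `f z + ε / (-l)` above `z`, the functional drops by exactly `ε`
    have := hφS (z, f z + ε / -l) (by simpa using div_pos hε hl)
    rw [hφ_apply, add_mul, div_mul_eq_mul_div, mul_div_assoc,
      div_neg_self (neg_pos.1 hl).ne] at this
    linarith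
  refine ⟨(-l)⁻¹ • ψ, ?_, fun z => ?_⟩
  · rw [smul_apply, smul_eq_mul, show ψ d = -l * c by linarith, inv_mul_cancel_left₀ hl.ne']
  · have := mul_le_mul_of_nonneg_left (hsupport z) (inv_nonneg.2 hl.le)
    rw [inv_mul_cancel_left₀ hl.ne'] at this
    rw [smul_apply, smul_eq_mul, map_sub]
    linarith

theorem ConvexOn.exists_subgradient_of_le_on_line (hf : ConvexOn ℝ univ f) (hfc : Continuous f)
    (hline : ∀ a : ℝ, f u + a * c ≤ f (u + a • d)) :
    ∃ G : StrongDual ℝ E, G d = c ∧ ∀ z, f u + G (z - u) ≤ f z := by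
  set S : Set (E × ℝ) := {p | p.1 ∈ univ ∧ f p.1 < p.2}
  set T : Set (E × ℝ) := AffineMap.lineMap (k := ℝ) (u, f u) (u + d, f u + c) '' univ
  have hT_eq : ∀ a : ℝ,
      AffineMap.lineMap (u, f u) (u + d, f u + c) a = (u + a • d, f u + a * c) := fun a => by
    simp [AffineMap.lineMap_apply, add_comm]
  have hS_open : IsOpen S := by
    simpa [S] using isOpen_lt (hfc.comp continuous_fst) continuous_snd
  have hdisj : Disjoint S T := by
    refine Set.disjoint_left.2 fun p ⟨_, hpS⟩ ⟨a, _, hpT⟩ => ?_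
    rw [← hpT, hT_eq] at hpS
    linarith [hline a]
  obtain ⟨φ, m, hφS, hφT⟩ := geometric_hahn_banach_open hf.convex_strict_epigraph hS_open
    (convex_univ.affine_image _) hdisj
  exact exists_subgradient_of_separates_strictEpigraph_line (fun p hp => hφS p ⟨trivial, hp⟩)
    fun a => hφT _ ⟨a, trivial, hT_eq a⟩

end Subgradient

theorem convex_mean_value_subgradient_general
    {p : ℕ} (f : EuclideanSpace ℝ (Fin p) → ℝ)
    (hconv : ConvexOn ℝ Set.univ f)
    (x y : EuclideanSpace ℝ (Fin p)) :
    ∃ t ∈ Set.Ioo (0 : ℝ) 1, ∃ g : EuclideanSpace ℝ (Fin p),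
      (∀ z, f (y + t • (x - y)) + ⟪g, z - (y + t • (x - y))⟫ ≤ f z) ∧
      f x - f y = ⟪g, x - y⟫ := by
  have hcont : Continuous f := continuousOn_univ.1 (hconv.continuousOn isOpen_univ)
  set φ : ℝ → ℝ := fun s => f (y + s • (x - y)) - (f x - f y) * s
  have hφ : ConvexOn ℝ univ φ := by
    have h := (hconv.comp_affineMap (AffineMap.lineMap y x)).sub
      (LinearMap.concaveOn ((f x - f y) • LinearMap.id) convex_univ)
    rw [preimage_univ] at h
    exact h.congr fun s _ => by simp [φ, AffineMap.lineMap_apply, add_comm, mul_comm]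
  obtain ⟨t, ht, htmin⟩ := hφ.exists_mem_Ioo_isMinOn_of_eq zero_lt_one (by simp [φ])
  have hline : ∀ a : ℝ, f (y + t • (x - y)) + a * (f x - f y) ≤
      f (y + t • (x - y) + a • (x - y)) := fun a => by
    have : φ t ≤ φ (t + a) := htmin (mem_univ _)
    simp only [φ, add_smul, ← add_assoc] at this
    linarith
  obtain ⟨G, hGd, hG⟩ := hconv.exists_subgradient_of_le_on_line hcont hline
  refine ⟨t, ht, (InnerProductSpace.toDual ℝ _).symm G, fun z => ?_, ?_⟩
  · simpa [InnerProductSpace.toDual_symm_apply] using hG z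
  · rw [InnerProductSpace.toDual_symm_apply, hGd]

/-- Lemma 1 (convex-function form of Lebourg's mean value theorem): for a convex
`f : ℝ^p → ℝ` and `x ≠ y`, there are `t ∈ (0,1)` and a subgradient `g` of `f` at
`u = y + t(x − y)` with `f(x) − f(y) = ⟨g, x − y⟩`. -/
theorem convex_mean_value_subgradient
    {p : ℕ} (f : EuclideanSpace ℝ (Fin p) → ℝ)
    (hconv : ConvexOn ℝ Set.univ f)
    (x y : EuclideanSpace ℝ (Fin p)) (hxy : x ≠ y) :
    ∃ t ∈ Set.Ioo (0 : ℝ) 1, ∃ g : EuclideanSpace ℝ (Fin p),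
      (∀ z, f (y + t • (x - y)) + ⟪g, z - (y + t • (x - y))⟫ ≤ f z) ∧
      f x - f y = ⟪g, x - y⟫ :=
  convex_mean_value_subgradient_general f hconv x y
end
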